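/- For every $n\in\mathbb{N}$ let $f_n:Q\times\mathbb{R}^d\to[0,+\infty)$ be continuous functions satisfying $\sup_n f_n(y,\xi)\le C(1+|\xi|^q)$ for all $y\in Q$, $\xi\in\mathbb{R}^d$, for some $C>0$ and $q>1$, and assume the family $\{f_n(y,\cdot)\}_{n,y}$ is equicontinuous on $\mathbb{R}^d$ uniformly in $y\in Q$. Let $\{w_n\}\subset L^q(Q;\mathbb{R}^d)$ be $q$-equiintegrable and let $v_n\to 0$ strongly in $L^q(Q;\mathbb{R}^d)$. Then $\lim_{n\to\infty}\big|\int_Q f_n(y,w_n(y))\,dy - \int_Q f_n(y,v_n(y)+w_n(y))\,dy\big| = 0$. -/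

import Mathlib

/-!
Fix `ε > 0` and let `δ` be the corresponding modulus of equicontinuity. Off the set
`Aₙ = {|vₙ| ≥ δ}` the two integrands differ by at most `ε`. On `Aₙ` the growth condition bounds
their difference by `C (2 + (1 + 2^(q-1)) |wₙ|^q + 2^(q-1) |vₙ|^q)`; by Chebyshev `|Aₙ| → 0`,
so equiintegrability makes `∫_{Aₙ} |wₙ|^q` small, while `∫ |vₙ|^q → 0` by assumption.
-/

open MeasureTheory Filter Set Topology

theorem norm_add_rpow_le {E : Type*} [SeminormedAddCommGroup E] {q : ℝ} (hq : 1 ≤ q)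
    (x y : E) : ‖x + y‖ ^ q ≤ 2 ^ (q - 1) * (‖x‖ ^ q + ‖y‖ ^ q) := by
  have hmean : (‖x‖₊ + ‖y‖₊ : ℝ) ^ q ≤ 2 ^ (q - 1) * (‖x‖ ^ q + ‖y‖ ^ q) := by
    exact_mod_cast NNReal.rpow_add_le_mul_rpow_add_rpow ‖x‖₊ ‖y‖₊ hq
  exact (Real.rpow_le_rpow (norm_nonneg _) (norm_add_le x y) (by linarith)).trans hmean

theorem tendsto_zero_of_forall_abs_le_add {ι : Type*} {l : Filter ι} {a : ι → ℝ}
    (h : ∀ ε : ℝ, 0 < ε → ∃ b : ι → ℝ, Tendsto b l (𝓝 0) ∧ ∀ᶠ i in l, |a i| ≤ ε + b i) :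
    Tendsto a l (𝓝 0) := by
  refine Metric.tendsto_nhds.2 fun ε hε => ?_
  obtain ⟨b, hb, hab⟩ := h (ε / 2) (half_pos hε)
  filter_upwards [hab, hb.eventually (gt_mem_nhds (half_pos hε))] with i hai hbi
  rw [Real.dist_eq, sub_zero]
  linarith

theorem abs_sub_add_le_of_growth {E : Type*} [SeminormedAddCommGroup E] {q C : ℝ} (hq : 1 ≤ q)
    (hC : 0 ≤ C) {g : E → ℝ} (hg0 : ∀ ξ, 0 ≤ g ξ) (hgrowth : ∀ ξ, g ξ ≤ C * (1 + ‖ξ‖ ^ q))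
    (v w : E) :
    |g w - g (v + w)| ≤ C * (2 + (1 + 2 ^ (q - 1)) * ‖w‖ ^ q + 2 ^ (q - 1) * ‖v‖ ^ q) := by
  have hvw := mul_le_mul_of_nonneg_left (norm_add_rpow_le hq v w) hC
  have hdiff : |g w - g (v + w)| ≤ g w + g (v + w) :=
    abs_sub_le_iff.2 ⟨by linarith [hg0 (v + w)], by linarith [hg0 w]⟩
  linarith [hgrowth w, hgrowth (v + w)]

section

variable {α : Type*} [MeasurableSpace α] {μ : Measure α} {s : Set α}

theorem measureReal_inter_norm_ge_le {E : Type*} [SeminormedAddCommGroup E] {v : α → E}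
    {q δ : ℝ} (hq : 0 < q) (hδ : 0 < δ) (hs : MeasurableSet s)
    (hvq : IntegrableOn (fun y => ‖v y‖ ^ q) s μ) :
    μ.real (s ∩ {y | δ ≤ ‖v y‖}) ≤ (∫ y in s, ‖v y‖ ^ q ∂μ) / δ ^ q := by
  have hmarkov := mul_meas_ge_le_integral_of_nonneg
    (ae_of_all _ fun y => Real.rpow_nonneg (norm_nonneg (v y)) q) hvq (δ ^ q)
  have hset : {y | δ ^ q ≤ ‖v y‖ ^ q} = {y | δ ≤ ‖v y‖} := by
    ext y
    exact Real.rpow_le_rpow_iff hδ.le (norm_nonneg _) hq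
  rw [hset, measureReal_restrict_apply' hs, inter_comm] at hmarkov
  rw [le_div_iff₀ (Real.rpow_pos_of_pos hδ q), mul_comm]
  exact hmarkov

theorem tendsto_setIntegral_of_equiintegrable {g : ℕ → α → ℝ} (hg : ∀ n y, 0 ≤ g n y)
    (hμs : μ s ≠ ⊤)
    (hequi : ∀ η : ℝ, 0 < η → ∃ ε : ℝ, 0 < ε ∧ ∀ A ⊆ s, MeasurableSet A →
      μ A < ENNReal.ofReal ε → ∀ n, ∫ y in A, g n y ∂μ < η)
    {A : ℕ → Set α} (hAs : ∀ n, A n ⊆ s) (hAm : ∀ n, MeasurableSet (A n))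
    (hA : Tendsto (fun n => μ.real (A n)) atTop (𝓝 0)) :
    Tendsto (fun n => ∫ y in A n, g n y ∂μ) atTop (𝓝 0) := by
  refine Metric.tendsto_nhds.2 fun η hη => ?_
  obtain ⟨ε, hε, hsmall⟩ := hequi η hη
  filter_upwards [hA.eventually (gt_mem_nhds hε)] with n hn
  have hAfin : μ (A n) ≠ ⊤ := ne_top_of_le_ne_top hμs (measure_mono (hAs n))
  rw [Real.dist_eq, sub_zero, abs_of_nonneg (integral_nonneg (hg n))]
  exact hsmall (A n) (hAs n) (hAm n) ((ENNReal.lt_ofReal_iff_toReal_lt hAfin).2 hn) n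

variable {E : Type*} [NormedAddCommGroup E] [MeasurableSpace E] {q C : ℝ}

theorem integrableOn_comp_of_growth {f : α → E → ℝ} (hs : MeasurableSet s) (hμs : μ s < ⊤)
    (hf : Measurable (Function.uncurry f)) (hf0 : ∀ y ∈ s, ∀ ξ, 0 ≤ f y ξ)
    (hgrowth : ∀ y ∈ s, ∀ ξ, f y ξ ≤ C * (1 + ‖ξ‖ ^ q)) {u : α → E} (hu : Measurable u)
    (huq : IntegrableOn (fun y => ‖u y‖ ^ q) s μ) :
    IntegrableOn (fun y => f y (u y)) s μ := by
  have hbound : IntegrableOn (fun y => C * (1 + ‖u y‖ ^ q)) s μ :=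
    ((integrableOn_const hμs.ne).add huq).const_mul C
  refine hbound.mono' (hf.comp (measurable_id.prodMk hu)).aestronglyMeasurable ?_
  filter_upwards [ae_restrict_mem hs] with y hy
  rw [Real.norm_eq_abs, abs_of_nonneg (hf0 y hy _)]
  exact hgrowth y hy _

theorem integrableOn_norm_add_rpow [BorelSpace E] [SecondCountableTopology E] (hq : 1 ≤ q)
    {v w : α → E} (hv : Measurable v) (hw : Measurable w)
    (hvq : IntegrableOn (fun y => ‖v y‖ ^ q) s μ) (hwq : IntegrableOn (fun y => ‖w y‖ ^ q) s μ) :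
    IntegrableOn (fun y => ‖v y + w y‖ ^ q) s μ := by
  refine ((hvq.add hwq).const_mul (2 ^ (q - 1))).mono'
    ((hv.add hw).norm.pow_const q).aestronglyMeasurable (ae_of_all _ fun y => ?_)
  rw [Real.norm_eq_abs, abs_of_nonneg (Real.rpow_nonneg (norm_nonneg _) q)]
  exact norm_add_rpow_le hq _ _

theorem abs_integral_sub_integral_add_le [BorelSpace E] [SecondCountableTopology E]
    {f : α → E → ℝ} {δ ε : ℝ} (hs : MeasurableSet s) (hμs : μ s < ⊤) (hq : 1 ≤ q) (hC : 0 ≤ C)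
    (hε : 0 ≤ ε) (hf : Measurable (Function.uncurry f)) (hf0 : ∀ y ∈ s, ∀ ξ, 0 ≤ f y ξ)
    (hgrowth : ∀ y ∈ s, ∀ ξ, f y ξ ≤ C * (1 + ‖ξ‖ ^ q))
    (hmod : ∀ y ∈ s, ∀ ξ₁ ξ₂ : E, ‖ξ₁ - ξ₂‖ < δ → |f y ξ₁ - f y ξ₂| ≤ ε)
    {v w : α → E} (hv : Measurable v) (hw : Measurable w)
    (hvq : IntegrableOn (fun y => ‖v y‖ ^ q) s μ) (hwq : IntegrableOn (fun y => ‖w y‖ ^ q) s μ) :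
    |∫ y in s, f y (w y) ∂μ - ∫ y in s, f y (v y + w y) ∂μ| ≤
      ε * μ.real s + C * (2 * μ.real (s ∩ {y | δ ≤ ‖v y‖}) +
        (1 + 2 ^ (q - 1)) * ∫ y in s ∩ {y | δ ≤ ‖v y‖}, ‖w y‖ ^ q ∂μ +
        2 ^ (q - 1) * ∫ y in s, ‖v y‖ ^ q ∂μ) := by
  set t := {y | δ ≤ ‖v y‖}
  set K : ℝ := 2 ^ (q - 1)
  have ht : MeasurableSet t := measurableSet_le measurable_const hv.norm
  have hfw := integrableOn_comp_of_growth hs hμs hf hf0 hgrowth hw hwq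
  have hfvw : IntegrableOn (fun y => f y (v y + w y)) s μ :=
    integrableOn_comp_of_growth hs hμs hf hf0 hgrowth (hv.add hw)
      (integrableOn_norm_add_rpow hq hv hw hvq hwq)
  have hD : IntegrableOn (fun y => |f y (w y) - f y (v y + w y)|) s μ :=
    (hfw.sub hfvw).abs
  have hbad : ∫ y in s ∩ t, |f y (w y) - f y (v y + w y)| ∂μ ≤
      C * (2 * μ.real (s ∩ t) + (1 + K) * ∫ y in s ∩ t, ‖w y‖ ^ q ∂μ +
        K * ∫ y in s, ‖v y‖ ^ q ∂μ) := by
    have hsti : IntegrableOn (fun _ => (2 : ℝ)) (s ∩ t) μ :=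
      integrableOn_const ((measure_mono inter_subset_left).trans_lt hμs).ne
    have hwt : IntegrableOn (fun y => (1 + K) * ‖w y‖ ^ q) (s ∩ t) μ :=
      (hwq.mono_set inter_subset_left).const_mul (1 + K)
    have hvt : IntegrableOn (fun y => K * ‖v y‖ ^ q) (s ∩ t) μ :=
      (hvq.mono_set inter_subset_left).const_mul K
    have hsum : IntegrableOn (fun y => 2 + (1 + K) * ‖w y‖ ^ q) (s ∩ t) μ := hsti.add hwt
    calc ∫ y in s ∩ t, |f y (w y) - f y (v y + w y)| ∂μ
        ≤ ∫ y in s ∩ t, C * (2 + (1 + K) * ‖w y‖ ^ q + K * ‖v y‖ ^ q) ∂μ :=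
          setIntegral_mono_on (hD.mono_set inter_subset_left)
            ((hsum.add hvt).const_mul C) (hs.inter ht) fun y hy =>
              abs_sub_add_le_of_growth hq hC (hf0 y hy.1) (hgrowth y hy.1) _ _
      _ = C * (2 * μ.real (s ∩ t) + (1 + K) * ∫ y in s ∩ t, ‖w y‖ ^ q ∂μ +
            K * ∫ y in s ∩ t, ‖v y‖ ^ q ∂μ) := by
          rw [integral_const_mul, integral_add hsum hvt, integral_add hsti hwt,
            setIntegral_const, integral_const_mul, integral_const_mul, smul_eq_mul, mul_comm 2]
      _ ≤ _ := by
          gcongr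
          exacts [ae_of_all _ fun y => Real.rpow_nonneg (norm_nonneg _) q, inter_subset_left]
  have hgood : ∫ y in s \ t, |f y (w y) - f y (v y + w y)| ∂μ ≤ ε * μ.real s := by
    have hsmall : ∀ y ∈ s \ t, ‖|f y (w y) - f y (v y + w y)|‖ ≤ ε := fun y hy => by
      rw [Real.norm_eq_abs, abs_abs]
      refine hmod y hy.1 _ _ ?_
      rw [sub_add_cancel_right, norm_neg]
      exact not_le.1 hy.2
    calc ∫ y in s \ t, |f y (w y) - f y (v y + w y)| ∂μ
        ≤ ε * μ.real (s \ t) := (le_abs_self _).trans <|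
          norm_setIntegral_le_of_norm_le_const ((measure_mono sdiff_subset).trans_lt hμs) hsmall
      _ ≤ ε * μ.real s := mul_le_mul_of_nonneg_left (measureReal_mono sdiff_subset hμs.ne) hε
  calc |∫ y in s, f y (w y) ∂μ - ∫ y in s, f y (v y + w y) ∂μ|
      = |∫ y in s, (f y (w y) - f y (v y + w y)) ∂μ| := by rw [integral_sub hfw hfvw]
    _ ≤ ∫ y in s, |f y (w y) - f y (v y + w y)| ∂μ := abs_integral_le_integral_abs
    _ = ∫ y in s ∩ t, |f y (w y) - f y (v y + w y)| ∂μ +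
          ∫ y in s \ t, |f y (w y) - f y (v y + w y)| ∂μ := (integral_inter_add_sdiff ht hD).symm
    _ ≤ _ := by linarith

end

theorem unitCube_eq_pi (N : ℕ) :
    {y : Fin N → ℝ | ∀ i, |y i| < 1 / 2} = univ.pi fun _ => Ioo (-(1 / 2)) (1 / 2) := by
  ext y
  simp [abs_lt]

theorem measurableSet_unitCube (N : ℕ) : MeasurableSet {y : Fin N → ℝ | ∀ i, |y i| < 1 / 2} := by
  rw [unitCube_eq_pi]
  exact MeasurableSet.univ_pi fun _ => measurableSet_Ioo

theorem volume_unitCube (N : ℕ) : volume {y : Fin N → ℝ | ∀ i, |y i| < 1 / 2} = 1 := by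
  rw [unitCube_eq_pi, volume_pi_pi]
  norm_num

/-- Proposition 3.2: vanishing `L^q` perturbations of a `q`-equiintegrable sequence do not
change the limits of the integral energies.  Here `Q` is the unit cube in `ℝ^N`,
the `f n` are continuous nonnegative integrands with uniform `q`-growth which are
equicontinuous in the second variable uniformly in `y ∈ Q` and `n`, the sequence `w n` is
`q`-equiintegrable, and `v n → 0` strongly in `L^q(Q; ℝ^d)`. -/
theorem stmt_1 (N d : ℕ) (q C : ℝ) (hq : 1 < q) (hC : 0 < C)
    (Q : Set (Fin N → ℝ)) (hQ : Q = {y | ∀ i, |y i| < 1/2})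
    (f : ℕ → (Fin N → ℝ) → (Fin d → ℝ) → ℝ)
    (hfcont : ∀ n, Continuous (fun p : (Fin N → ℝ) × (Fin d → ℝ) => f n p.1 p.2))
    (hfnonneg : ∀ n y ξ, 0 ≤ f n y ξ)
    (hfgrowth : ∀ n, ∀ y ∈ Q, ∀ ξ, f n y ξ ≤ C * (1 + ‖ξ‖ ^ q))
    (hfequicont : ∀ ε : ℝ, 0 < ε → ∃ δ : ℝ, 0 < δ ∧
      ∀ n, ∀ y ∈ Q, ∀ ξ₁ ξ₂ : Fin d → ℝ, ‖ξ₁ - ξ₂‖ < δ → |f n y ξ₁ - f n y ξ₂| < ε)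
    (w v : ℕ → (Fin N → ℝ) → (Fin d → ℝ))
    (hw : ∀ n, Measurable (w n)) (hv : ∀ n, Measurable (v n))
    (hwq : ∀ n, Integrable (fun y => ‖w n y‖ ^ q) (volume.restrict Q))
    (hvq : ∀ n, Integrable (fun y => ‖v n y‖ ^ q) (volume.restrict Q))
    -- `q`-equiintegrability of `w`
    (hwequi : ∀ η : ℝ, 0 < η → ∃ ε : ℝ, 0 < ε ∧ ∀ A ⊆ Q, MeasurableSet A →
      volume A < ENNReal.ofReal ε → ∀ n, ∫ y in A, ‖w n y‖ ^ q < η)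
    -- `v n → 0` strongly in `L^q(Q; ℝ^d)`
    (hv0 : Tendsto (fun n => ∫ y in Q, ‖v n y‖ ^ q) atTop (nhds 0)) :
    Tendsto (fun n =>
        |(∫ y in Q, f n y (w n y)) - ∫ y in Q, f n y (v n y + w n y)|) atTop (nhds 0) := by
  have hQm : MeasurableSet Q := hQ ▸ measurableSet_unitCube N
  have hQ1 : volume Q = 1 := hQ ▸ volume_unitCube N
  have hQfin : volume Q < ⊤ := by simp [hQ1]
  refine (tendsto_zero_iff_abs_tendsto_zero _).1 <|
    tendsto_zero_of_forall_abs_le_add fun ε hε => ?_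
  obtain ⟨δ, hδ, hmod⟩ := hfequicont ε hε
  have hA : Tendsto (fun n => volume.real (Q ∩ {y | δ ≤ ‖v n y‖})) atTop (𝓝 0) := by
    refine squeeze_zero (fun _ => measureReal_nonneg)
      (fun n => measureReal_inter_norm_ge_le (by linarith) hδ hQm (hvq n)) ?_
    simpa using hv0.div_const (δ ^ q)
  have hwA : Tendsto (fun n => ∫ y in Q ∩ {y | δ ≤ ‖v n y‖}, ‖w n y‖ ^ q) atTop (𝓝 0) :=
    tendsto_setIntegral_of_equiintegrable (fun n y => Real.rpow_nonneg (norm_nonneg _) q)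
      hQfin.ne hwequi (fun n => inter_subset_left)
      (fun n => hQm.inter (measurableSet_le measurable_const (hv n).norm)) hA
  refine ⟨fun n => C * (2 * volume.real (Q ∩ {y | δ ≤ ‖v n y‖}) +
      (1 + 2 ^ (q - 1)) * (∫ y in Q ∩ {y | δ ≤ ‖v n y‖}, ‖w n y‖ ^ q) +
      2 ^ (q - 1) * ∫ y in Q, ‖v n y‖ ^ q), ?_, Eventually.of_forall fun n => ?_⟩
  · simpa using (((hA.const_mul 2).add (hwA.const_mul _)).add (hv0.const_mul _)).const_mul C
  · simpa [measureReal_def, hQ1] using abs_integral_sub_integral_add_le hQm hQfin hq.le hC.le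
      hε.le (hfcont n).measurable (fun y _ => hfnonneg n y) (hfgrowth n)
      (fun y hy ξ₁ ξ₂ h => (hmod n y hy ξ₁ ξ₂ h).le) (hv n) (hw n) (hvq n) (hwq n)
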